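/- arXiv:1506.01183 — 2 statements merged into one kernel-verified Lean document; each statement's English description precedes it below -/
import Mathlib

section
/- Let T>0, M₁, M₂ ≥ 0 and 1 < p < ∞. Let a, b, c, u : [0,T]×ℝ → ℝ be smooth functions such that for every t ∈ [0,T] the section x ↦ u(t,x) is a Schwartz function with all Schwartz seminorms bounded uniformly for t in [0,T], u ≥ 0 on [0,T]×ℝ, |b_x| ≤ M₁ and |a_x c_x − a c| ≤ M₂ on [0,T]×ℝ, and u_t = u_x b + (3/2) u b_x − (3/2) u (a_x c_x − a c) on [0,T]×ℝ. Then for every t ∈ [0,T], ‖u(t,·)‖_{L^p(ℝ)} ≤ e^{(3/2)(M₁ + M₂) t} ‖u(0,·)‖_{L^p(ℝ)}. -/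
open Set MeasureTheory

section helpers
variable {f : ℝ → ℝ → ℝ}

lemma partial2_hasDerivAt (hf : ContDiff ℝ (⊤ : ℕ∞) (fun q : ℝ × ℝ => f q.1 q.2)) (t x : ℝ) :
    HasDerivAt (f t) (fderiv ℝ (fun q : ℝ × ℝ => f q.1 q.2) (t, x) (0, 1)) x := by
  have h1 : HasFDerivAt (fun q : ℝ × ℝ => f q.1 q.2)
      (fderiv ℝ (fun q : ℝ × ℝ => f q.1 q.2) (t, x)) (t, x) :=
    (hf.differentiable (by simp) (t, x)).hasFDerivAt
  have h2 : HasDerivAt (fun y : ℝ => ((t, y) : ℝ × ℝ)) ((0 : ℝ), (1 : ℝ)) x :=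
    (hasDerivAt_const x t).prodMk (hasDerivAt_id x)
  exact h1.comp_hasDerivAt x h2

lemma partial1_hasDerivAt (hf : ContDiff ℝ (⊤ : ℕ∞) (fun q : ℝ × ℝ => f q.1 q.2)) (t x : ℝ) :
    HasDerivAt (fun s => f s x) (fderiv ℝ (fun q : ℝ × ℝ => f q.1 q.2) (t, x) (1, 0)) t := by
  have h1 : HasFDerivAt (fun q : ℝ × ℝ => f q.1 q.2)
      (fderiv ℝ (fun q : ℝ × ℝ => f q.1 q.2) (t, x)) (t, x) :=
    (hf.differentiable (by simp) (t, x)).hasFDerivAt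
  have h2 : HasDerivAt (fun s : ℝ => ((s, x) : ℝ × ℝ)) ((1 : ℝ), (0 : ℝ)) t :=
    (hasDerivAt_id t).prodMk (hasDerivAt_const t x)
  exact h1.comp_hasDerivAt t h2

lemma partial2_cont (hf : ContDiff ℝ (⊤ : ℕ∞) (fun q : ℝ × ℝ => f q.1 q.2)) :
    Continuous (fun q : ℝ × ℝ => deriv (f q.1) q.2) := by
  have he : (fun q : ℝ × ℝ => deriv (f q.1) q.2)
      = fun q : ℝ × ℝ => fderiv ℝ (fun q : ℝ × ℝ => f q.1 q.2) q (0, 1) := by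
    funext q
    exact (partial2_hasDerivAt hf q.1 q.2).deriv
  rw [he]
  exact (hf.continuous_fderiv (by simp)).clm_apply continuous_const

lemma partial1_cont (hf : ContDiff ℝ (⊤ : ℕ∞) (fun q : ℝ × ℝ => f q.1 q.2)) :
    Continuous (fun q : ℝ × ℝ => deriv (fun s => f s q.2) q.1) := by
  have he : (fun q : ℝ × ℝ => deriv (fun s => f s q.2) q.1)
      = fun q : ℝ × ℝ => fderiv ℝ (fun q : ℝ × ℝ => f q.1 q.2) q (1, 0) := by
    funext q
    exact (partial1_hasDerivAt hf q.1 q.2).deriv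
  rw [he]
  exact (hf.continuous_fderiv (by simp)).clm_apply continuous_const

lemma aux_rpow_factor {v q : ℝ} (hv : 0 ≤ v) (hq : 1 ≤ q) : v ^ q = v ^ (q - 1) * v := by
  rcases eq_or_lt_of_le hv with h | h
  · rw [← h, Real.zero_rpow (by linarith : q ≠ 0), mul_zero]
  · have := Real.rpow_add_one (ne_of_gt h) (q - 1)
    rw [sub_add_cancel] at this
    rw [this]

lemma aux_poly (x : ℝ) : (1 + |x|) * (1 + x ^ 2) ≤ 2 * (1 + |x| ^ 3) := by
  have h1 : 0 ≤ |x| := abs_nonneg x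
  have h2 : x ^ 2 = |x| ^ 2 := (sq_abs x).symm
  nlinarith [sq_nonneg (|x| - 1), mul_nonneg (mul_nonneg h1 h1) h1,
    mul_nonneg (sq_nonneg (|x| - 1)) h1]

lemma aux_div {x r C : ℝ} (h : r * (1 + x ^ 2) ≤ C) : r ≤ C * (1 + x ^ 2)⁻¹ := by
  have hx : (0 : ℝ) < 1 + x ^ 2 := by positivity
  rw [← div_eq_mul_inv, le_div_iff₀ hx]
  exact h

lemma aux_int {f : ℝ → ℝ} (hf : AEStronglyMeasurable f volume) {C : ℝ}
    (h : ∀ x, |f x| ≤ C * (1 + x ^ 2)⁻¹) : Integrable f volume := by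
  refine (integrable_inv_one_add_sq.const_mul C).mono' hf ?_
  exact ae_of_all _ fun x => by simpa [Real.norm_eq_abs] using h x

end helpers

set_option maxHeartbeats 2000000 in
/-- Lᵖ-estimate of Lemma 2.3 (`p = 1 + ε`). For smooth `a, b, c, u` on
`[0,T] × ℝ` with Schwartz sections of `u` uniformly in `t`, `u ≥ 0`, `|b_x| ≤ M₁`,
`|a_x c_x - a c| ≤ M₂`, and `u_t = u_x b + (3/2) u b_x - (3/2) u (a_x c_x - a c)`, we have
`‖u(t)‖_{Lᵖ} ≤ e^{(3/2)(M₁ + M₂) t} ‖u(0)‖_{Lᵖ}` for `1 < p < ∞`. -/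
theorem Lp_estimate_u (T : ℝ) (hT : 0 < T) (M₁ M₂ : ℝ) (hM₁ : 0 ≤ M₁) (hM₂ : 0 ≤ M₂)
    (p : ℝ) (hp : 1 < p)
    (a b c u : ℝ → ℝ → ℝ)
    (hasm : ContDiff ℝ (⊤ : ℕ∞) (fun q : ℝ × ℝ => a q.1 q.2))
    (hbsm : ContDiff ℝ (⊤ : ℕ∞) (fun q : ℝ × ℝ => b q.1 q.2))
    (hcsm : ContDiff ℝ (⊤ : ℕ∞) (fun q : ℝ × ℝ => c q.1 q.2))
    (husm : ContDiff ℝ (⊤ : ℕ∞) (fun q : ℝ × ℝ => u q.1 q.2))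
    (hdecay : ∀ k n : ℕ, ∃ C : ℝ, ∀ t ∈ Icc (0 : ℝ) T, ∀ x : ℝ,
      |x| ^ k * |iteratedDeriv n (u t) x| ≤ C)
    (hupos : ∀ t ∈ Icc (0 : ℝ) T, ∀ x : ℝ, 0 ≤ u t x)
    (hbx : ∀ t ∈ Icc (0 : ℝ) T, ∀ x : ℝ, |deriv (b t) x| ≤ M₁)
    (hac : ∀ t ∈ Icc (0 : ℝ) T, ∀ x : ℝ,
      |deriv (a t) x * deriv (c t) x - a t x * c t x| ≤ M₂)
    (heq : ∀ t ∈ Icc (0 : ℝ) T, ∀ x : ℝ,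
      deriv (fun s => u s x) t
        = deriv (u t) x * b t x + (3 / 2) * u t x * deriv (b t) x
            - (3 / 2) * u t x * (deriv (a t) x * deriv (c t) x - a t x * c t x)) :
    ∀ t ∈ Icc (0 : ℝ) T,
      eLpNorm (u t) (ENNReal.ofReal p) volume
        ≤ ENNReal.ofReal (Real.exp ((3 / 2) * (M₁ + M₂) * t))
            * eLpNorm (u 0) (ENNReal.ofReal p) volume := by
  have hp0 : (0 : ℝ) < p := lt_trans one_pos hp
  have hp1 : (1 : ℝ) ≤ p := hp.le
  set K : ℝ := 3 / 2 * (M₁ + M₂) with hK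
  have hKnn : 0 ≤ K := by positivity
  set Kp : ℝ := p * K with hKp
  have hKpnn : 0 ≤ Kp := by positivity
  have h0T : (0 : ℝ) ∈ Icc (0 : ℝ) T := ⟨le_refl 0, hT.le⟩
  -- pointwise derivatives
  have hut : ∀ t x : ℝ, HasDerivAt (fun s => u s x) (deriv (fun s => u s x) t) t :=
    fun t x => (partial1_hasDerivAt husm t x).differentiableAt.hasDerivAt
  have hux : ∀ t x : ℝ, HasDerivAt (u t) (deriv (u t) x) x :=
    fun t x => (partial2_hasDerivAt husm t x).differentiableAt.hasDerivAt
  have hbd : ∀ t x : ℝ, HasDerivAt (b t) (deriv (b t) x) x :=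
    fun t x => (partial2_hasDerivAt hbsm t x).differentiableAt.hasDerivAt
  -- notation
  set g : ℝ → ℝ → ℝ := fun s x => p * u s x ^ (p - 1) * deriv (fun σ => u σ x) s with hgdef
  set F : ℝ → ℝ := fun s => ∫ x : ℝ, u s x ^ p with hFdef
  set G : ℝ → ℝ := fun s => ∫ x : ℝ, g s x with hGdef
  -- continuity facts
  have hucont : Continuous (fun q : ℝ × ℝ => u q.1 q.2) := husm.continuous
  have hgcont : Continuous (fun z : ℝ × ℝ => g z.1 z.2) := by
    refine Continuous.mul (continuous_const.mul ?_) (partial1_cont husm)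
    exact hucont.rpow_const fun q => Or.inr (by linarith)
  have hupcont : ∀ s : ℝ, Continuous (fun x => u s x ^ p) := by
    intro s
    exact (hucont.comp (Continuous.prodMk_right s)).rpow_const fun x => Or.inr (by linarith)
  -- decay constants
  obtain ⟨C00, h00⟩ := hdecay 0 0
  obtain ⟨C20, h20⟩ := hdecay 2 0
  obtain ⟨C01, h01⟩ := hdecay 0 1
  obtain ⟨C31, h31⟩ := hdecay 3 1
  have h00' : ∀ s ∈ Icc (0 : ℝ) T, ∀ x : ℝ, |u s x| ≤ C00 := by
    intro s hs x; simpa [iteratedDeriv_zero] using h00 s hs x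
  have h20' : ∀ s ∈ Icc (0 : ℝ) T, ∀ x : ℝ, x ^ 2 * |u s x| ≤ C20 := by
    intro s hs x; simpa [iteratedDeriv_zero, sq_abs] using h20 s hs x
  have h01' : ∀ s ∈ Icc (0 : ℝ) T, ∀ x : ℝ, |deriv (u s) x| ≤ C01 := by
    intro s hs x; simpa [iteratedDeriv_one] using h01 s hs x
  have h31' : ∀ s ∈ Icc (0 : ℝ) T, ∀ x : ℝ, |x| ^ 3 * |deriv (u s) x| ≤ C31 := by
    intro s hs x; simpa [iteratedDeriv_one] using h31 s hs x
  have hC00 : 0 ≤ C00 := le_trans (abs_nonneg _) (h00' 0 h0T 0)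
  set Cu2 : ℝ := C00 + C20 with hCu2def
  have hCu2 : ∀ s ∈ Icc (0 : ℝ) T, ∀ x : ℝ, (1 + x ^ 2) * |u s x| ≤ Cu2 := by
    intro s hs x
    have := h00' s hs x; have := h20' s hs x; nlinarith [abs_nonneg (u s x)]
  set Cx3 : ℝ := C01 + C31 with hCx3def
  have hCx3 : ∀ s ∈ Icc (0 : ℝ) T, ∀ x : ℝ, (1 + |x| ^ 3) * |deriv (u s) x| ≤ Cx3 := by
    intro s hs x
    have := h01' s hs x; have := h31' s hs x
    nlinarith [abs_nonneg (deriv (u s) x)]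
  set Cpm : ℝ := C00 ^ (p - 1) with hCpmdef
  have hCpm : 0 ≤ Cpm := Real.rpow_nonneg hC00 _
  have hupm1 : ∀ s ∈ Icc (0 : ℝ) T, ∀ x : ℝ, u s x ^ (p - 1) ≤ Cpm := by
    intro s hs x
    exact Real.rpow_le_rpow (hupos s hs x) (le_trans (le_abs_self _) (h00' s hs x))
      (by linarith)
  have hup_le : ∀ s ∈ Icc (0 : ℝ) T, ∀ x : ℝ, u s x ^ p ≤ Cpm * u s x := by
    intro s hs x
    rw [aux_rpow_factor (hupos s hs x) hp1]
    exact mul_le_mul_of_nonneg_right (hupm1 s hs x) (hupos s hs x)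
  have hupnn : ∀ s ∈ Icc (0 : ℝ) T, ∀ x : ℝ, 0 ≤ u s x ^ p :=
    fun s hs x => Real.rpow_nonneg (hupos s hs x) p
  -- bound on b
  obtain ⟨Bb, hBb⟩ : ∃ Bb : ℝ, ∀ s ∈ Icc (0 : ℝ) T, |b s 0| ≤ Bb := by
    obtain ⟨Bb, hBb⟩ := (isCompact_Icc (a := (0:ℝ)) (b := T)).exists_bound_of_continuousOn
      (f := fun s => b s 0)
      ((hbsm.continuous.comp (continuous_id.prodMk continuous_const)).continuousOn)
    exact ⟨Bb, fun s hs => by simpa [Real.norm_eq_abs] using hBb s hs⟩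
  have hBbnn : 0 ≤ Bb := le_trans (abs_nonneg _) (hBb 0 h0T)
  have hblin : ∀ s ∈ Icc (0 : ℝ) T, ∀ x : ℝ, |b s x| ≤ Bb + M₁ * |x| := by
    intro s hs x
    have h1 : ‖b s x - b s 0‖ ≤ M₁ * ‖x - 0‖ := by
      refine convex_univ.norm_image_sub_le_of_norm_deriv_le
        (fun y _ => (hbd s y).differentiableAt) (fun y _ => ?_)
        (mem_univ 0) (mem_univ x)
      simpa [Real.norm_eq_abs] using hbx s hs y
    simp only [Real.norm_eq_abs, sub_zero] at h1
    have := abs_sub_abs_le_abs_sub (b s x) (b s 0)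
    have := hBb s hs
    linarith
  -- master pointwise bounds
  set Cut : ℝ := 2 * (Bb + M₁) * Cx3 + 3 / 2 * (M₁ + M₂) * Cu2 with hCutdef
  have huxb_key : ∀ s ∈ Icc (0 : ℝ) T, ∀ x : ℝ,
      |deriv (u s) x * b s x| * (1 + x ^ 2) ≤ 2 * (Bb + M₁) * Cx3 := by
    intro s hs x
    have t1 : |deriv (u s) x * b s x| ≤ (Bb + M₁) * ((1 + |x|) * |deriv (u s) x|) := by
      rw [abs_mul]
      have h1 := hblin s hs x
      nlinarith [mul_le_mul_of_nonneg_left h1 (abs_nonneg (deriv (u s) x)),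
        mul_nonneg (mul_nonneg hBbnn (abs_nonneg (deriv (u s) x))) (abs_nonneg x),
        mul_nonneg hM₁ (abs_nonneg (deriv (u s) x))]
    have e1 : (1 + |x|) * (1 + x ^ 2) * |deriv (u s) x| ≤ 2 * (1 + |x| ^ 3) * |deriv (u s) x| :=
      mul_le_mul_of_nonneg_right (aux_poly x) (abs_nonneg _)
    have e2 := hCx3 s hs x
    have hBM : 0 ≤ Bb + M₁ := by linarith
    nlinarith [mul_le_mul_of_nonneg_right t1 (by positivity : (0:ℝ) ≤ 1 + x ^ 2),
      mul_le_mul_of_nonneg_left e1 hBM, mul_le_mul_of_nonneg_left e2 hBM,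
      abs_nonneg (deriv (u s) x)]
  have hut_key : ∀ s ∈ Icc (0 : ℝ) T, ∀ x : ℝ,
      |deriv (fun σ => u σ x) s| * (1 + x ^ 2) ≤ Cut := by
    intro s hs x
    have habs : |deriv (fun σ => u σ x) s|
        ≤ |deriv (u s) x * b s x| + 3 / 2 * (M₁ + M₂) * |u s x| := by
      rw [heq s hs x]
      have t2 : |3 / 2 * u s x * deriv (b s) x| ≤ 3 / 2 * M₁ * |u s x| := by
        rw [abs_mul, abs_mul]
        have := hbx s hs x
        have : |u s x| * |deriv (b s) x| ≤ |u s x| * M₁ :=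
          mul_le_mul_of_nonneg_left (hbx s hs x) (abs_nonneg _)
        rw [abs_of_nonneg (by norm_num : (0:ℝ) ≤ 3/2)]
        nlinarith
      have t3 : |3 / 2 * u s x * (deriv (a s) x * deriv (c s) x - a s x * c s x)|
          ≤ 3 / 2 * M₂ * |u s x| := by
        rw [abs_mul, abs_mul]
        have : |u s x| * |deriv (a s) x * deriv (c s) x - a s x * c s x| ≤ |u s x| * M₂ :=
          mul_le_mul_of_nonneg_left (hac s hs x) (abs_nonneg _)
        rw [abs_of_nonneg (by norm_num : (0:ℝ) ≤ 3/2)]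
        nlinarith
      calc |deriv (u s) x * b s x + 3 / 2 * u s x * deriv (b s) x
            - 3 / 2 * u s x * (deriv (a s) x * deriv (c s) x - a s x * c s x)|
          ≤ |deriv (u s) x * b s x + 3 / 2 * u s x * deriv (b s) x|
            + |3 / 2 * u s x * (deriv (a s) x * deriv (c s) x - a s x * c s x)| :=
            abs_sub _ _
        _ ≤ |deriv (u s) x * b s x| + |3 / 2 * u s x * deriv (b s) x|
            + |3 / 2 * u s x * (deriv (a s) x * deriv (c s) x - a s x * c s x)| := by
            have := abs_add_le (deriv (u s) x * b s x) (3 / 2 * u s x * deriv (b s) x)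
            linarith
        _ ≤ |deriv (u s) x * b s x| + 3 / 2 * (M₁ + M₂) * |u s x| := by linarith
    have e3 := hCu2 s hs x
    have e4 := huxb_key s hs x
    have m1 := mul_le_mul_of_nonneg_right habs (by positivity : (0:ℝ) ≤ 1 + x ^ 2)
    have m2 := mul_le_mul_of_nonneg_left e3 (by linarith : (0:ℝ) ≤ 3 / 2 * (M₁ + M₂))
    calc |deriv (fun σ => u σ x) s| * (1 + x ^ 2)
        ≤ (|deriv (u s) x * b s x| + 3 / 2 * (M₁ + M₂) * |u s x|) * (1 + x ^ 2) := m1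
      _ = |deriv (u s) x * b s x| * (1 + x ^ 2)
          + 3 / 2 * (M₁ + M₂) * ((1 + x ^ 2) * |u s x|) := by ring
      _ ≤ 2 * (Bb + M₁) * Cx3 + 3 / 2 * (M₁ + M₂) * Cu2 := add_le_add e4 m2
      _ = Cut := hCutdef.symm
  have hut_dom : ∀ s ∈ Icc (0 : ℝ) T, ∀ x : ℝ,
      |deriv (fun σ => u σ x) s| ≤ Cut * (1 + x ^ 2)⁻¹ :=
    fun s hs x => aux_div (hut_key s hs x)
  have huxb_dom : ∀ s ∈ Icc (0 : ℝ) T, ∀ x : ℝ,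
      |deriv (u s) x * b s x| ≤ 2 * (Bb + M₁) * Cx3 * (1 + x ^ 2)⁻¹ :=
    fun s hs x => aux_div (huxb_key s hs x)
  have hu_dom : ∀ s ∈ Icc (0 : ℝ) T, ∀ x : ℝ, |u s x| ≤ Cu2 * (1 + x ^ 2)⁻¹ :=
    fun s hs x => aux_div (by linarith [hCu2 s hs x, mul_comm (1 + x ^ 2) |u s x|])
  have hup_dom : ∀ s ∈ Icc (0 : ℝ) T, ∀ x : ℝ,
      |u s x ^ p| ≤ Cpm * Cu2 * (1 + x ^ 2)⁻¹ := by
    intro s hs x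
    rw [abs_of_nonneg (hupnn s hs x)]
    calc u s x ^ p ≤ Cpm * u s x := hup_le s hs x
      _ ≤ Cpm * (Cu2 * (1 + x ^ 2)⁻¹) := by
          refine mul_le_mul_of_nonneg_left (le_trans (le_abs_self _) (hu_dom s hs x)) hCpm
      _ = Cpm * Cu2 * (1 + x ^ 2)⁻¹ := by ring
  have hg_dom : ∀ s ∈ Icc (0 : ℝ) T, ∀ x : ℝ,
      |g s x| ≤ p * Cpm * Cut * (1 + x ^ 2)⁻¹ := by
    intro s hs x
    have h1 : |g s x| = p * u s x ^ (p - 1) * |deriv (fun σ => u σ x) s| := by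
      rw [hgdef]
      simp only []
      rw [abs_mul, abs_mul, abs_of_nonneg hp0.le,
        abs_of_nonneg (Real.rpow_nonneg (hupos s hs x) _)]
    rw [h1]
    have h2 := hut_dom s hs x
    have h3 := hupm1 s hs x
    have h4 : 0 ≤ u s x ^ (p - 1) := Real.rpow_nonneg (hupos s hs x) _
    have h6 : (0:ℝ) ≤ Cut * (1 + x ^ 2)⁻¹ := le_trans (abs_nonneg _) h2
    calc p * u s x ^ (p - 1) * |deriv (fun σ => u σ x) s|
        ≤ p * u s x ^ (p - 1) * (Cut * (1 + x ^ 2)⁻¹) :=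
          mul_le_mul_of_nonneg_left h2 (mul_nonneg hp0.le h4)
      _ ≤ p * Cpm * (Cut * (1 + x ^ 2)⁻¹) :=
          mul_le_mul_of_nonneg_right (mul_le_mul_of_nonneg_left h3 hp0.le) h6
      _ = p * Cpm * Cut * (1 + x ^ 2)⁻¹ := by ring
  -- nonnegativity of constants
  have hCu2nn : 0 ≤ Cu2 := le_trans (by positivity) (hCu2 0 h0T 0)
  -- A and sectioned continuity
  set A : ℝ → ℝ → ℝ := fun s x => deriv (a s) x * deriv (c s) x - a s x * c s x with hAdef
  have hAcont : Continuous (fun z : ℝ × ℝ => A z.1 z.2) :=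
    ((partial2_cont hasm).mul (partial2_cont hcsm)).sub (hasm.continuous.mul hcsm.continuous)
  have hbscont : ∀ s : ℝ, Continuous (b s) := fun s =>
    hbsm.continuous.comp (Continuous.prodMk_right s)
  have hbxcont : ∀ s : ℝ, Continuous (fun x => deriv (b s) x) := fun s =>
    (partial2_cont hbsm).comp (Continuous.prodMk_right s)
  have huxcont : ∀ s : ℝ, Continuous (fun x => deriv (u s) x) := fun s =>
    (partial2_cont husm).comp (Continuous.prodMk_right s)
  have hAscont : ∀ s : ℝ, Continuous (A s) := fun s => hAcont.comp (Continuous.prodMk_right s)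
  have hupm1cont : ∀ s : ℝ, Continuous (fun x => u s x ^ (p - 1)) := fun s =>
    (hucont.comp (Continuous.prodMk_right s)).rpow_const fun x => Or.inr (by linarith)
  -- integrability
  have int_up : ∀ s ∈ Icc (0 : ℝ) T, Integrable (fun x => u s x ^ p) volume := fun s hs =>
    aux_int (hupcont s).aestronglyMeasurable (fun x => hup_dom s hs x)
  have int_upbx : ∀ s ∈ Icc (0 : ℝ) T,
      Integrable (fun x => u s x ^ p * deriv (b s) x) volume := by
    intro s hs
    refine aux_int (((hupcont s).mul (hbxcont s)).aestronglyMeasurable)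
      (C := Cpm * Cu2 * M₁) ?_
    intro x
    rw [abs_mul]
    calc |u s x ^ p| * |deriv (b s) x| ≤ Cpm * Cu2 * (1 + x ^ 2)⁻¹ * M₁ :=
          mul_le_mul (hup_dom s hs x) (hbx s hs x) (abs_nonneg _) (by positivity)
      _ = Cpm * Cu2 * M₁ * (1 + x ^ 2)⁻¹ := by ring
  have int_upA : ∀ s ∈ Icc (0 : ℝ) T,
      Integrable (fun x => u s x ^ p * A s x) volume := by
    intro s hs
    refine aux_int (((hupcont s).mul (hAscont s)).aestronglyMeasurable)
      (C := Cpm * Cu2 * M₂) ?_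
    intro x
    rw [abs_mul]
    calc |u s x ^ p| * |A s x| ≤ Cpm * Cu2 * (1 + x ^ 2)⁻¹ * M₂ :=
          mul_le_mul (hup_dom s hs x) (hac s hs x) (abs_nonneg _) (by positivity)
      _ = Cpm * Cu2 * M₂ * (1 + x ^ 2)⁻¹ := by ring
  have int_P1 : ∀ s ∈ Icc (0 : ℝ) T,
      Integrable (fun x => p * u s x ^ (p - 1) * deriv (u s) x * b s x) volume := by
    intro s hs
    refine aux_int ((((continuous_const.mul (hupm1cont s)).mul (huxcont s)).mul
      (hbscont s)).aestronglyMeasurable) (C := p * Cpm * (2 * (Bb + M₁) * Cx3)) ?_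
    intro x
    have h2 := huxb_dom s hs x
    have h3 := hupm1 s hs x
    have h4 : 0 ≤ u s x ^ (p - 1) := Real.rpow_nonneg (hupos s hs x) _
    have h6 : (0 : ℝ) ≤ 2 * (Bb + M₁) * Cx3 * (1 + x ^ 2)⁻¹ := le_trans (abs_nonneg _) h2
    have h7 : |p * u s x ^ (p - 1) * deriv (u s) x * b s x|
        = p * u s x ^ (p - 1) * |deriv (u s) x * b s x| := by
      rw [show p * u s x ^ (p - 1) * deriv (u s) x * b s x
          = p * u s x ^ (p - 1) * (deriv (u s) x * b s x) by ring, abs_mul, abs_mul,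
        abs_of_nonneg hp0.le, abs_of_nonneg h4]
    rw [h7]
    calc p * u s x ^ (p - 1) * |deriv (u s) x * b s x|
        ≤ p * u s x ^ (p - 1) * (2 * (Bb + M₁) * Cx3 * (1 + x ^ 2)⁻¹) :=
          mul_le_mul_of_nonneg_left h2 (mul_nonneg hp0.le h4)
      _ ≤ p * Cpm * (2 * (Bb + M₁) * Cx3 * (1 + x ^ 2)⁻¹) :=
          mul_le_mul_of_nonneg_right (mul_le_mul_of_nonneg_left h3 hp0.le) h6
      _ = p * Cpm * (2 * (Bb + M₁) * Cx3) * (1 + x ^ 2)⁻¹ := by ring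
  have int_g : ∀ s ∈ Icc (0 : ℝ) T, Integrable (g s) volume := fun s hs =>
    aux_int (hgcont.comp (Continuous.prodMk_right s)).aestronglyMeasurable (hg_dom s hs)
  -- integration by parts
  have hIBP : ∀ s ∈ Icc (0 : ℝ) T,
      (∫ x : ℝ, p * u s x ^ (p - 1) * deriv (u s) x * b s x)
        = - ∫ x : ℝ, u s x ^ p * deriv (b s) x := by
    intro s hs
    set w : ℝ → ℝ := fun x => u s x ^ p * b s x with hwdef
    set w' : ℝ → ℝ := fun x =>
      p * u s x ^ (p - 1) * deriv (u s) x * b s x + u s x ^ p * deriv (b s) x with hw'def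
    have hder : ∀ x : ℝ, HasDerivAt w (w' x) x := by
      intro x
      have h1 : HasDerivAt (fun y => u s y ^ p) (p * u s x ^ (p - 1) * deriv (u s) x) x := by
        have h0 := (Real.hasDerivAt_rpow_const (x := u s x) (p := p) (Or.inr hp1)).comp
          x (hux s x)
        exact h0
      exact h1.mul (hbd s x)
    have hint : Integrable w' volume := (int_P1 s hs).add (int_upbx s hs)
    have hwb : ∀ x : ℝ, |w x| ≤ 2 * Cpm * (Bb + M₁) * Cu2 * (1 + |x|)⁻¹ := by
      intro x
      have hx1 : (0 : ℝ) < 1 + |x| := by positivity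
      rw [← div_eq_mul_inv, le_div_iff₀ hx1]
      have e0 : |w x| = |u s x ^ p| * |b s x| := abs_mul _ _
      have e1 : |u s x ^ p| ≤ Cpm * |u s x| := by
        rw [abs_of_nonneg (hupnn s hs x)]
        exact le_trans (hup_le s hs x) (mul_le_mul_of_nonneg_left (le_abs_self _) hCpm)
      have e2 := hblin s hs x
      have e3 := hCu2 s hs x
      have step2 : (Bb + M₁ * |x|) * (1 + |x|) ≤ (Bb + M₁) * (2 * (1 + x ^ 2)) := by
        nlinarith [mul_nonneg hBbnn (sq_nonneg (|x| - 1)), mul_nonneg hM₁ (sq_nonneg (|x| - 1)),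
          mul_nonneg hBbnn (abs_nonneg x), mul_nonneg hM₁ (abs_nonneg x), sq_abs x,
          abs_nonneg x]
      calc |w x| * (1 + |x|) = |u s x ^ p| * (|b s x| * (1 + |x|)) := by rw [e0]; ring
        _ ≤ (Cpm * |u s x|) * ((Bb + M₁ * |x|) * (1 + |x|)) := by
            refine mul_le_mul e1 (mul_le_mul_of_nonneg_right e2 hx1.le) ?_ ?_
            · positivity
            · exact mul_nonneg hCpm (abs_nonneg _)
        _ ≤ (Cpm * |u s x|) * ((Bb + M₁) * (2 * (1 + x ^ 2))) :=
            mul_le_mul_of_nonneg_left step2 (mul_nonneg hCpm (abs_nonneg _))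
        _ = 2 * Cpm * (Bb + M₁) * ((1 + x ^ 2) * |u s x|) := by ring
        _ ≤ 2 * Cpm * (Bb + M₁) * Cu2 :=
            mul_le_mul_of_nonneg_left e3
              (by positivity)
    have hdecayw : Filter.Tendsto (fun x : ℝ => 2 * Cpm * (Bb + M₁) * Cu2 * (1 + |x|)⁻¹)
        Filter.atTop (nhds 0) ∧
        Filter.Tendsto (fun x : ℝ => 2 * Cpm * (Bb + M₁) * Cu2 * (1 + |x|)⁻¹)
        Filter.atBot (nhds 0) := by
      constructor
      · have h1 : Filter.Tendsto (fun x : ℝ => 1 + |x|) Filter.atTop Filter.atTop :=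
          Filter.tendsto_atTop_add_const_left _ 1 Filter.tendsto_abs_atTop_atTop
        simpa [mul_zero] using (tendsto_inv_atTop_zero.comp h1).const_mul
          (2 * Cpm * (Bb + M₁) * Cu2)
      · have h1 : Filter.Tendsto (fun x : ℝ => 1 + |x|) Filter.atBot Filter.atTop :=
          Filter.tendsto_atTop_add_const_left _ 1 Filter.tendsto_abs_atBot_atTop
        simpa [mul_zero] using (tendsto_inv_atTop_zero.comp h1).const_mul
          (2 * Cpm * (Bb + M₁) * Cu2)
    have htop : Filter.Tendsto w Filter.atTop (nhds 0) :=
      squeeze_zero_norm (fun x => by simpa [Real.norm_eq_abs] using hwb x) hdecayw.1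
    have hbot : Filter.Tendsto w Filter.atBot (nhds 0) :=
      squeeze_zero_norm (fun x => by simpa [Real.norm_eq_abs] using hwb x) hdecayw.2
    have h1 : ∫ x in Ioi (0 : ℝ), w' x = 0 - w 0 :=
      MeasureTheory.integral_Ioi_of_hasDerivAt_of_tendsto' (fun x _ => hder x)
        hint.integrableOn htop
    have h2 : ∫ x in Iic (0 : ℝ), w' x = w 0 - 0 :=
      MeasureTheory.integral_Iic_of_hasDerivAt_of_tendsto' (fun x _ => hder x)
        hint.integrableOn hbot
    have h3 : ∫ x : ℝ, w' x = 0 := by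
      rw [← intervalIntegral.integral_Iic_add_Ioi hint.integrableOn hint.integrableOn, h1, h2]
      ring
    have h4 : (∫ x : ℝ, p * u s x ^ (p - 1) * deriv (u s) x * b s x)
        + ∫ x : ℝ, u s x ^ p * deriv (b s) x = 0 := by
      rw [← MeasureTheory.integral_add (int_P1 s hs) (int_upbx s hs)]
      exact h3
    linarith
  -- bound |G s| ≤ Kp * F s
  have hFnn : ∀ s ∈ Icc (0 : ℝ) T, 0 ≤ F s := fun s hs =>
    integral_nonneg (fun x => hupnn s hs x)
  have hGF : ∀ s ∈ Icc (0 : ℝ) T, |G s| ≤ Kp * F s := by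
    intro s hs
    have hg_eq : ∀ x : ℝ, g s x
        = p * u s x ^ (p - 1) * deriv (u s) x * b s x
          + (3 / 2 * p) * (u s x ^ p * deriv (b s) x)
          - (3 / 2 * p) * (u s x ^ p * A s x) := by
      intro x
      have hsplit : u s x ^ (p - 1) * u s x = u s x ^ p :=
        (aux_rpow_factor (hupos s hs x) hp1).symm
      show p * u s x ^ (p - 1) * deriv (fun σ => u σ x) s = _
      rw [heq s hs x]
      show _ = _ - 3 / 2 * p * (u s x ^ p * (deriv (a s) x * deriv (c s) x - a s x * c s x))
      linear_combination (3 / 2 * p * deriv (b s) x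
        - 3 / 2 * p * (deriv (a s) x * deriv (c s) x - a s x * c s x)) * hsplit
    have hGeq : G s = (∫ x : ℝ, p * u s x ^ (p - 1) * deriv (u s) x * b s x)
        + (3 / 2 * p) * (∫ x : ℝ, u s x ^ p * deriv (b s) x)
        - (3 / 2 * p) * (∫ x : ℝ, u s x ^ p * A s x) := by
      show (∫ x : ℝ, g s x) = _
      have i0 := (int_upbx s hs).const_mul (3 / 2 * p)
      have i2 := (int_upA s hs).const_mul (3 / 2 * p)
      have i1 : Integrable (fun x : ℝ => p * u s x ^ (p - 1) * deriv (u s) x * b s x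
          + 3 / 2 * p * (u s x ^ p * deriv (b s) x)) volume := (int_P1 s hs).add i0
      rw [integral_congr_ae (ae_of_all _ hg_eq), integral_sub i1 i2,
        integral_add (int_P1 s hs) i0,
        MeasureTheory.integral_const_mul, MeasureTheory.integral_const_mul]
    have hJ1 : |∫ x : ℝ, u s x ^ p * deriv (b s) x| ≤ M₁ * F s := by
      calc |∫ x : ℝ, u s x ^ p * deriv (b s) x| ≤ ∫ x : ℝ, |u s x ^ p * deriv (b s) x| := by
            have := norm_integral_le_integral_norm (μ := volume)
              (f := fun x : ℝ => u s x ^ p * deriv (b s) x)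
            simpa only [Real.norm_eq_abs] using this
        _ ≤ ∫ x : ℝ, M₁ * u s x ^ p := by
            refine integral_mono (int_upbx s hs).abs ((int_up s hs).const_mul M₁) fun x => ?_
            show |u s x ^ p * deriv (b s) x| ≤ M₁ * u s x ^ p
            rw [abs_mul, abs_of_nonneg (hupnn s hs x)]
            calc u s x ^ p * |deriv (b s) x| ≤ u s x ^ p * M₁ :=
                  mul_le_mul_of_nonneg_left (hbx s hs x) (hupnn s hs x)
              _ = M₁ * u s x ^ p := by ring
        _ = M₁ * F s := MeasureTheory.integral_const_mul M₁ _
    have hJ2 : |∫ x : ℝ, u s x ^ p * A s x| ≤ M₂ * F s := by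
      calc |∫ x : ℝ, u s x ^ p * A s x| ≤ ∫ x : ℝ, |u s x ^ p * A s x| := by
            have := norm_integral_le_integral_norm (μ := volume)
              (f := fun x : ℝ => u s x ^ p * A s x)
            simpa only [Real.norm_eq_abs] using this
        _ ≤ ∫ x : ℝ, M₂ * u s x ^ p := by
            refine integral_mono (int_upA s hs).abs ((int_up s hs).const_mul M₂) fun x => ?_
            show |u s x ^ p * A s x| ≤ M₂ * u s x ^ p
            rw [abs_mul, abs_of_nonneg (hupnn s hs x)]
            calc u s x ^ p * |A s x| ≤ u s x ^ p * M₂ :=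
                  mul_le_mul_of_nonneg_left (hac s hs x) (hupnn s hs x)
              _ = M₂ * u s x ^ p := by ring
        _ = M₂ * F s := MeasureTheory.integral_const_mul M₂ _
    have hGval : G s = (3 / 2 * p - 1) * (∫ x : ℝ, u s x ^ p * deriv (b s) x)
        - (3 / 2 * p) * (∫ x : ℝ, u s x ^ p * A s x) := by
      rw [hGeq, hIBP s hs]; ring
    have hFsnn : 0 ≤ F s := hFnn s hs
    have hc1 : (0 : ℝ) ≤ 3 / 2 * p - 1 := by linarith
    have hc2 : (0 : ℝ) ≤ 3 / 2 * p := by linarith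
    calc |G s| ≤ (3 / 2 * p - 1) * |∫ x : ℝ, u s x ^ p * deriv (b s) x|
          + (3 / 2 * p) * |∫ x : ℝ, u s x ^ p * A s x| := by
          rw [hGval]
          refine le_trans (abs_sub _ _) ?_
          rw [abs_mul, abs_mul, abs_of_nonneg hc1, abs_of_nonneg hc2]
      _ ≤ Kp * F s := by
          have m1 := mul_le_mul_of_nonneg_left hJ1 hc1
          have m2 := mul_le_mul_of_nonneg_left hJ2 hc2
          have hKp' : Kp = 3 / 2 * p * (M₁ + M₂) := by rw [hKp, hK]; ring
          nlinarith [mul_nonneg hM₁ hFsnn]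
  -- Fubini: product integrability
  have hprod : ∀ t ∈ Icc (0 : ℝ) T,
      Integrable (fun z : ℝ × ℝ => g z.1 z.2) ((volume.restrict (Ioc 0 t)).prod volume) := by
    intro t ht
    have hdom : Integrable (fun z : ℝ × ℝ => (1 : ℝ) * (p * Cpm * Cut * (1 + z.2 ^ 2)⁻¹))
        ((volume.restrict (Ioc 0 t)).prod volume) := by
      have hfin : IsFiniteMeasure (volume.restrict (Ioc (0 : ℝ) t)) := by
        constructor
        rw [Measure.restrict_apply_univ]
        exact measure_Ioc_lt_top
      exact (integrable_const (μ := volume.restrict (Ioc (0 : ℝ) t)) (1 : ℝ)).mul_prod (integrable_inv_one_add_sq.const_mul (p * Cpm * Cut))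
    refine hdom.mono' hgcont.aestronglyMeasurable ?_
    have hmem : ∀ᵐ z : ℝ × ℝ ∂((volume.restrict (Ioc 0 t)).prod volume), z.1 ∈ Ioc (0:ℝ) t := by
      rw [Measure.ae_prod_iff_ae_ae (measurableSet_Ioc.preimage measurable_fst)]
      exact (ae_restrict_mem measurableSet_Ioc).mono fun s hs => ae_of_all _ fun _ => hs
    filter_upwards [hmem] with z hz
    have hz' : z.1 ∈ Icc (0:ℝ) T := ⟨hz.1.le, le_trans hz.2 ht.2⟩
    rw [Real.norm_eq_abs, one_mul]
    exact hg_dom z.1 hz' z.2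
  have hGIoc : ∀ t ∈ Icc (0 : ℝ) T, IntegrableOn G (Ioc 0 t) volume := fun t ht =>
    (hprod t ht).integral_prod_left
  -- Fubini identity
  have hFid : ∀ t ∈ Icc (0 : ℝ) T, F t = F 0 + ∫ s in Ioc (0 : ℝ) t, G s := by
    intro t ht
    have hptw : ∀ x : ℝ, u t x ^ p - u 0 x ^ p = ∫ s in Ioc (0 : ℝ) t, g s x := by
      intro x
      have hderiv : ∀ s ∈ uIcc (0 : ℝ) t, HasDerivAt (fun σ => u σ x ^ p) (g s x) s :=
        fun s _ => by
          have h0 := (Real.hasDerivAt_rpow_const (x := u s x) (p := p) (Or.inr hp1)).comp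
            s (hut s x)
          exact h0
      have hcont : Continuous (fun s => g s x) :=
        hgcont.comp (continuous_id.prodMk continuous_const)
      have h5 := intervalIntegral.integral_eq_sub_of_hasDerivAt hderiv
        (hcont.intervalIntegrable 0 t)
      rw [intervalIntegral.integral_of_le ht.1] at h5
      rw [← h5]
    have hswap := MeasureTheory.integral_integral_swap
      (μ := volume.restrict (Ioc (0 : ℝ) t)) (ν := volume) (f := fun s x => g s x)
      (hprod t ht)
    have hsub : F t - F 0 = ∫ x : ℝ, (u t x ^ p - u 0 x ^ p) :=
      (integral_sub (int_up t ht) (int_up 0 h0T)).symm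
    have h6 : F t - F 0 = ∫ s in Ioc (0 : ℝ) t, G s := by
      rw [hsub, integral_congr_ae (ae_of_all _ hptw), ← hswap]
    linarith
  -- Gronwall setup
  have hGIcc : IntegrableOn G (Icc 0 T) volume := by
    rw [integrableOn_Icc_iff_integrableOn_Ioc]
    exact hGIoc T ⟨hT.le, le_refl T⟩
  have hFcont : ContinuousOn F (Icc 0 T) := by
    have h1 := intervalIntegral.continuousOn_primitive (f := G) (μ := volume)
      (a := 0) (b := T) hGIcc
    exact ContinuousOn.congr (continuousOn_const.add h1) fun r hr => hFid r hr
  have hFint : IntegrableOn F (Icc 0 T) volume :=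
    hFcont.integrableOn_compact isCompact_Icc
  set H : ℝ → ℝ := fun r => F 0 + Kp * ∫ s in (0 : ℝ)..r, F s with hHdef
  have hFIoc : ∀ t ∈ Icc (0 : ℝ) T, IntegrableOn F (Ioc 0 t) volume := fun t ht =>
    hFint.mono_set fun y hy => ⟨hy.1.le, le_trans hy.2 ht.2⟩
  have hHval : ∀ t ∈ Icc (0 : ℝ) T, H t = F 0 + Kp * ∫ s in Ioc (0 : ℝ) t, F s := by
    intro t ht
    rw [hHdef]
    simp only []
    rw [intervalIntegral.integral_of_le ht.1]
  have hFleH : ∀ t ∈ Icc (0 : ℝ) T, F t ≤ H t := by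
    intro t ht
    have h1 : (∫ s in Ioc (0 : ℝ) t, G s) ≤ ∫ s in Ioc (0 : ℝ) t, Kp * F s := by
      refine setIntegral_mono_on (hGIoc t ht) ((hFIoc t ht).const_mul Kp)
        measurableSet_Ioc fun s hs => ?_
      exact le_trans (le_abs_self _) (hGF s ⟨hs.1.le, le_trans hs.2 ht.2⟩)
    have h2 : (∫ s in Ioc (0 : ℝ) t, Kp * F s) = Kp * ∫ s in Ioc (0 : ℝ) t, F s :=
      MeasureTheory.integral_const_mul Kp _
    rw [hFid t ht, hHval t ht]
    linarith
  have hHnn : ∀ t ∈ Icc (0 : ℝ) T, 0 ≤ H t := by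
    intro t ht
    have h4 : 0 ≤ ∫ s in Ioc (0 : ℝ) t, F s :=
      setIntegral_nonneg measurableSet_Ioc fun s hs => hFnn s ⟨hs.1.le, le_trans hs.2 ht.2⟩
    have := hFnn 0 h0T
    rw [hHval t ht]
    nlinarith [mul_nonneg hKpnn h4]
  have hHcont : ContinuousOn H (Icc 0 T) := by
    have h1 := intervalIntegral.continuousOn_primitive (f := F) (μ := volume)
      (a := 0) (b := T) hFint
    exact ContinuousOn.congr (continuousOn_const.add (continuousOn_const.mul h1))
      fun r hr => hHval r hr
  have hH' : ∀ t ∈ Ico (0 : ℝ) T, HasDerivWithinAt H (Kp * F t) (Ici t) t := by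
    intro t ht
    have htIcc : t ∈ Icc (0 : ℝ) T := ⟨ht.1, ht.2.le⟩
    have hmemIci : Icc (0 : ℝ) T ∈ nhdsWithin t (Ici t) := by
      rw [mem_nhdsWithin]
      exact ⟨Iio T, isOpen_Iio, ht.2, fun y hy => ⟨le_trans ht.1 hy.2, hy.1.le⟩⟩
    have hmemIoi : Icc (0 : ℝ) T ∈ nhdsWithin t (Ioi t) := by
      rw [mem_nhdsWithin]
      exact ⟨Iio T, isOpen_Iio, ht.2, fun y hy => ⟨le_trans ht.1 hy.2.le, hy.1.le⟩⟩
    have hInt : IntervalIntegrable F volume 0 t := by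
      rw [intervalIntegrable_iff_integrableOn_Ioc_of_le ht.1]
      exact hFIoc t htIcc
    have hmeas : StronglyMeasurableAtFilter F (nhdsWithin t (Ioi t)) volume :=
      ⟨Icc 0 T, hmemIoi, hFcont.aestronglyMeasurable measurableSet_Icc⟩
    have hcw : ContinuousWithinAt F (Ioi t) t :=
      (hFcont t htIcc).mono_of_mem_nhdsWithin hmemIoi
    have hd := intervalIntegral.integral_hasDerivWithinAt_right (a := 0)
      (s := Ici t) (t := Ioi t) hInt hmeas hcw
    exact (hd.const_mul Kp).const_add (F 0)
  have hH0 : H 0 = F 0 := by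
    rw [hHdef]
    simp [intervalIntegral.integral_same]
  have hgron := norm_le_gronwallBound_of_norm_deriv_right_le (f := H)
    (f' := fun t => Kp * F t) (δ := F 0) (K := Kp) (ε := 0) (a := 0) (b := T)
    hHcont hH'
    (by rw [hH0, Real.norm_eq_abs, abs_of_nonneg (hFnn 0 h0T)])
    (by
      intro r hr
      have hrIcc : r ∈ Icc (0 : ℝ) T := ⟨hr.1, hr.2.le⟩
      have h1 : 0 ≤ F r := hFnn r hrIcc
      rw [Real.norm_eq_abs, Real.norm_eq_abs, abs_of_nonneg (mul_nonneg hKpnn h1),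
        abs_of_nonneg (hHnn r hrIcc)]
      have h2 := hFleH r hrIcc
      nlinarith [mul_le_mul_of_nonneg_left h2 hKpnn])
  have hFexp : ∀ t ∈ Icc (0 : ℝ) T, F t ≤ F 0 * Real.exp (Kp * t) := by
    intro t ht
    have h3 := hgron t ht
    rw [Real.norm_eq_abs, abs_of_nonneg (hHnn t ht), gronwallBound_ε0, sub_zero] at h3
    exact le_trans (hFleH t ht) h3
  -- conversion to eLpNorm
  intro t ht
  have hq0 : ENNReal.ofReal p ≠ 0 := by
    simp only [ne_eq, ENNReal.ofReal_eq_zero, not_le]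
    exact hp0
  have hqt : ENNReal.ofReal p ≠ ⊤ := ENNReal.ofReal_ne_top
  have hqr : (ENNReal.ofReal p).toReal = p := ENNReal.toReal_ofReal hp0.le
  have key : ∀ r ∈ Icc (0 : ℝ) T, eLpNorm (u r) (ENNReal.ofReal p) volume
      = ENNReal.ofReal (F r) ^ (1 / p) := by
    intro r hr
    rw [MeasureTheory.eLpNorm_eq_lintegral_rpow_enorm_toReal hq0 hqt, hqr]
    congr 1
    have h1 : ∀ x : ℝ, ‖u r x‖ₑ ^ p = ENNReal.ofReal (u r x ^ p) := fun x => by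
      rw [Real.enorm_eq_ofReal (hupos r hr x),
        ENNReal.ofReal_rpow_of_nonneg (hupos r hr x) hp0.le]
    rw [lintegral_congr h1,
      ← MeasureTheory.ofReal_integral_eq_lintegral_ofReal (int_up r hr)
        (ae_of_all _ fun x => hupnn r hr x)]
  rw [key t ht, key 0 h0T]
  have h2 : ENNReal.ofReal (F t) ≤ ENNReal.ofReal (F 0 * Real.exp (Kp * t)) :=
    ENNReal.ofReal_le_ofReal (hFexp t ht)
  calc ENNReal.ofReal (F t) ^ (1 / p)
      ≤ ENNReal.ofReal (F 0 * Real.exp (Kp * t)) ^ (1 / p) :=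
        ENNReal.rpow_le_rpow h2 (by positivity)
    _ = ENNReal.ofReal (F 0) ^ (1 / p) * ENNReal.ofReal (Real.exp (Kp * t)) ^ (1 / p) := by
        rw [ENNReal.ofReal_mul (hFnn 0 h0T), ENNReal.mul_rpow_of_nonneg _ _
          (by positivity : (0:ℝ) ≤ 1 / p)]
    _ = ENNReal.ofReal (Real.exp (K * t)) * ENNReal.ofReal (F 0) ^ (1 / p) := by
        rw [mul_comm]
        congr 1
        rw [ENNReal.ofReal_rpow_of_pos (Real.exp_pos _)]
        congr 1
        rw [← Real.exp_mul]
        congr 1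
        rw [hKp]
        field_simp
end

section
/- Let a, b, c : ℝ → ℝ be three times differentiable functions satisfying the constraint 4b − b'' = a''c' − c''a' + 3a'c − 3ac' on ℝ, and set w = c − c''. Then for every x ∈ ℝ: w'b + (3/2) w b' + (3/2) w (a'c' − ac) = (c'b) − (c'b)'' + ½ f₂' + ½ g₂, where f₂ = b'c' − a'(c')² + 3bc + 3acc' and g₂ = bc' − 3ac² − 3a'cc'. -/
theorem deriv_deriv_mul {𝕜 𝔸 : Type*} [NontriviallyNormedField 𝕜] [NormedCommRing 𝔸]
    [NormedAlgebra 𝕜 𝔸] {f g : 𝕜 → 𝔸} {x : 𝕜} (hf : Differentiable 𝕜 f)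
    (hg : Differentiable 𝕜 g) (hf' : DifferentiableAt 𝕜 (deriv f) x)
    (hg' : DifferentiableAt 𝕜 (deriv g) x) :
    deriv (deriv (fun y => f y * g y)) x
      = deriv (deriv f) x * g x + 2 * deriv f x * deriv g x + f x * deriv (deriv g) x := by
  have hfg : deriv (fun y => f y * g y) = fun y => deriv f y * g y + f y * deriv g y :=
    funext fun y => deriv_mul (hf y) (hg y)
  rw [hfg, ((hf'.hasDerivAt.fun_mul (hg x).hasDerivAt).fun_add
    ((hf x).hasDerivAt.fun_mul hg'.hasDerivAt)).deriv]
  ring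

theorem hyperbolic_reformulation_third_eq_general (a b c : ℝ → ℝ)
    (ha : Differentiable ℝ a) (ha' : Differentiable ℝ (deriv a))
    (hb : Differentiable ℝ b) (hb' : Differentiable ℝ (deriv b))
    (hc : Differentiable ℝ c) (hc' : Differentiable ℝ (deriv c))
    (hc'' : Differentiable ℝ (deriv (deriv c)))
    (hconstraint : ∀ x : ℝ,
      4 * b x - deriv (deriv b) x
        = deriv (deriv a) x * deriv c x - deriv (deriv c) x * deriv a x
            + 3 * deriv a x * c x - 3 * a x * deriv c x)
    (w f₂ g₂ : ℝ → ℝ)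
    (hw : w = fun x => c x - deriv (deriv c) x)
    (hf₂ : f₂ = fun y => deriv b y * deriv c y - deriv a y * (deriv c y) ^ 2
      + 3 * b y * c y + 3 * a y * c y * deriv c y)
    (hg₂ : g₂ = fun y => b y * deriv c y - 3 * a y * (c y) ^ 2
      - 3 * deriv a y * c y * deriv c y) :
    ∀ x : ℝ,
      deriv w x * b x + (3 / 2) * w x * deriv b x
          + (3 / 2) * w x * (deriv a x * deriv c x - a x * c x)
        = deriv c x * b x - deriv (deriv (fun y => deriv c y * b y)) x
            + (1 / 2) * deriv f₂ x + (1 / 2) * g₂ x := by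
  intro x
  subst hw hf₂ hg₂
  have hf₂' := ((((hb' x).hasDerivAt.fun_mul (hc' x).hasDerivAt).fun_sub
      ((ha' x).hasDerivAt.fun_mul ((hc' x).hasDerivAt.fun_pow 2))).fun_add
    (((hb x).hasDerivAt.const_mul 3).fun_mul (hc x).hasDerivAt)).fun_add
    ((((ha x).hasDerivAt.const_mul 3).fun_mul (hc x).hasDerivAt).fun_mul (hc' x).hasDerivAt)
  rw [deriv_fun_sub (hc x) (hc'' x), deriv_deriv_mul hc' hb (hc'' x) (hb' x), hf₂'.deriv]
  linear_combination (-(deriv c x) / 2) * hconstraint x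

/-- pointwise identity underlying the hyperbolic reformulation of the third
equation: for three times differentiable `a, b, c` satisfying the constraint
`4b - b'' = a''c' - c''a' + 3a'c - 3ac'`, with `w = c - c''`,
`f₂ = b'c' - a'(c')² + 3bc + 3acc'` and `g₂ = bc' - 3ac² - 3a'cc'`, one has
`w'b + (3/2)wb' + (3/2)w(a'c' - ac) = (c'b) - (c'b)'' + ½ f₂' + ½ g₂`. -/
theorem hyperbolic_reformulation_third_eq (a b c : ℝ → ℝ)
    (ha : Differentiable ℝ a) (ha' : Differentiable ℝ (deriv a))
    (ha'' : Differentiable ℝ (deriv (deriv a)))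
    (hb : Differentiable ℝ b) (hb' : Differentiable ℝ (deriv b))
    (hb'' : Differentiable ℝ (deriv (deriv b)))
    (hc : Differentiable ℝ c) (hc' : Differentiable ℝ (deriv c))
    (hc'' : Differentiable ℝ (deriv (deriv c)))
    (hconstraint : ∀ x : ℝ,
      4 * b x - deriv (deriv b) x
        = deriv (deriv a) x * deriv c x - deriv (deriv c) x * deriv a x
            + 3 * deriv a x * c x - 3 * a x * deriv c x)
    (w f₂ g₂ : ℝ → ℝ)
    (hw : w = fun x => c x - deriv (deriv c) x)
    (hf₂ : f₂ = fun y => deriv b y * deriv c y - deriv a y * (deriv c y) ^ 2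
      + 3 * b y * c y + 3 * a y * c y * deriv c y)
    (hg₂ : g₂ = fun y => b y * deriv c y - 3 * a y * (c y) ^ 2
      - 3 * deriv a y * c y * deriv c y) :
    ∀ x : ℝ,
      deriv w x * b x + (3 / 2) * w x * deriv b x
          + (3 / 2) * w x * (deriv a x * deriv c x - a x * c x)
        = deriv c x * b x - deriv (deriv (fun y => deriv c y * b y)) x
            + (1 / 2) * deriv f₂ x + (1 / 2) * g₂ x :=
  hyperbolic_reformulation_third_eq_general a b c ha ha' hb hb' hc hc' hc'' hconstraint w f₂ g₂ hw
    hf₂ hg₂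
end
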